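/- arXiv:1503.08792 — 6 statements merged into one kernel-verified Lean document; each statement's English description precedes it below -/
import Mathlib

section
/- For all natural numbers k and n with k < n and k * n even, there exists a k-regular simple graph on n vertices. -/
/-!
Take the circulant graph on `ZMod n` whose connection set `s` is symmetric (`-s = s`) and avoids
`0`: the neighbours of `v` are the `v - t` for `t ∈ s`, so every vertex has degree `|s|`. For
`k = 2m < n` take `s = {±1, …, ±m}`, whose elements are distinct since they are integers in a
window of length `2m + 1 ≤ n`. For `k = 2m + 1` the parity hypothesis makes `n = 2p` even, and
`p = -p` can be added to `s` as a self-inverse jump.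
-/

open Pointwise

namespace SimpleGraph

variable {G : Type*} [AddGroup G] {s : Set G}

theorem circulantGraph_adj_iff_sub_mem (hs : -s = s) (h0 : 0 ∉ s) {v w : G} :
    (circulantGraph s).Adj v w ↔ v - w ∈ s := by
  have hsub : w - v ∈ s ↔ v - w ∈ s := by rw [← neg_sub, ← Set.mem_neg, hs]
  rw [circulantGraph_adj, hsub, or_self, and_iff_right_iff_imp]
  rintro h rfl
  exact h0 (sub_self v ▸ h)

theorem card_neighborSet_circulantGraph (hs : -s = s) (h0 : 0 ∉ s) (v : G) :
    Nat.card ((circulantGraph s).neighborSet v) = Nat.card s := by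
  have : (circulantGraph s).neighborSet v = (v - ·) ⁻¹' s :=
    Set.ext fun _ => circulantGraph_adj_iff_sub_mem hs h0
  rw [this]
  exact Nat.card_preimage_of_injective (Equiv.subLeft v).injective
    ((Equiv.subLeft v).surjective.range_eq ▸ Set.subset_univ s)

end SimpleGraph

namespace ZMod

theorem intCast_injOn_Ico (n : ℕ) (a : ℤ) :
    Set.InjOn ((↑) : ℤ → ZMod n) (Set.Ico a (a + n)) := by
  intro x hx y hy hxy
  rw [intCast_eq_intCast_iff_dvd_sub] at hxy
  have := Int.eq_zero_of_abs_lt_dvd hxy (by rw [abs_lt]; simp only [Set.mem_Ico] at hx hy; omega)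
  omega

theorem neg_intCast_image_eq {n : ℕ} {t : Set ℤ} (ht : -t = t) :
    -(((↑) : ℤ → ZMod n) '' t) = (↑) '' t := by
  rw [← Set.image_neg_eq_neg, Set.image_image]
  conv_rhs => rw [← ht, ← Set.image_neg_eq_neg, Set.image_image]
  simp

def symmJumps (n m : ℕ) : Set (ZMod n) := (↑) '' (Set.Icc (-m : ℤ) m \ {0})

variable {n m : ℕ}

theorem neg_symmJumps : -symmJumps n m = symmJumps n m := by
  refine neg_intCast_image_eq (Set.ext fun x => ?_)
  simp only [Set.mem_neg, Set.mem_sdiff, Set.mem_Icc, Set.mem_singleton_iff]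
  omega

theorem intCast_injOn_Icc_neg (h : 2 * m < n) :
    Set.InjOn ((↑) : ℤ → ZMod n) (Set.Icc (-m : ℤ) m) :=
  (intCast_injOn_Ico n (-m)).mono fun x hx => by
    simp only [Set.mem_Icc, Set.mem_Ico] at hx ⊢; omega

theorem zero_notMem_symmJumps (h : 2 * m < n) : 0 ∉ symmJumps n m := by
  rintro ⟨a, ⟨ha, ha0⟩, hcast⟩
  exact ha0 (intCast_injOn_Icc_neg h ha (by simp) (hcast.trans Int.cast_zero.symm))

theorem card_symmJumps (h : 2 * m < n) : Nat.card (symmJumps n m) = 2 * m := by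
  rw [symmJumps, Nat.card_image_of_injOn ((intCast_injOn_Icc_neg h).mono Set.sdiff_subset),
    Nat.card_coe_set_eq, Set.ncard_sdiff_singleton_of_mem (by simp), Set.ncard_eq_toFinset_card']
  simp only [Set.toFinset_Icc, Int.card_Icc]
  omega

theorem neg_natCast_self_add_self (p : ℕ) : -(p : ZMod (p + p)) = p := by
  rw [neg_eq_iff_add_eq_zero, ← Nat.cast_add, natCast_self]

theorem natCast_notMem_symmJumps {p : ℕ} (h : m < p) :
    (p : ZMod (p + p)) ∉ symmJumps (p + p) m := by
  rintro ⟨a, ⟨ha, -⟩, hcast⟩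
  rw [← Int.cast_natCast] at hcast
  have := intCast_injOn_Ico (p + p) (-m) (by simp only [Set.mem_Icc, Set.mem_Ico] at ha ⊢; omega)
    (by simp only [Set.mem_Ico]; omega) hcast
  simp only [Set.mem_Icc] at ha
  omega

theorem exists_neg_eq_zero_notMem_card_eq {k n : ℕ} (hkn : k < n) (heven : Even (k * n)) :
    ∃ s : Set (ZMod n), -s = s ∧ 0 ∉ s ∧ Nat.card s = k := by
  rcases Nat.even_or_odd' k with ⟨m, rfl | rfl⟩
  · exact ⟨symmJumps n m, neg_symmJumps, zero_notMem_symmJumps hkn, card_symmJumps hkn⟩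
  obtain ⟨p, rfl⟩ : Even n := (Nat.even_mul.mp heven).resolve_left (by simp [parity_simps])
  have hm : 2 * m < p + p := by omega
  have hp : (p : ZMod (p + p)) ∉ symmJumps (p + p) m := natCast_notMem_symmJumps (by omega)
  refine ⟨insert (p : ZMod (p + p)) (symmJumps (p + p) m), ?_, ?_, ?_⟩
  · rw [Set.neg_insert, neg_natCast_self_add_self, neg_symmJumps]
  · rintro (h0 | h0)
    · have := Nat.le_of_dvd (by omega) ((natCast_eq_zero_iff p (p + p)).mp h0.symm)
      omega
    · exact zero_notMem_symmJumps hm h0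
  · rw [Nat.card_coe_set_eq, Set.ncard_insert_of_notMem hp
      ((Set.finite_Icc _ _).sdiff.image _), ← Nat.card_coe_set_eq, card_symmJumps hm]

end ZMod

/-- For all `k < n` with `k * n` even, there exists a `k`-regular simple graph
on `n` vertices. -/
theorem stmt_1 (k n : ℕ) (hkn : k < n) (heven : Even (k * n)) :
    ∃ G : SimpleGraph (Fin n), ∀ v : Fin n, Nat.card (G.neighborSet v) = k := by
  obtain ⟨s, hs, h0, hcard⟩ := ZMod.exists_neg_eq_zero_notMem_card_eq hkn heven
  obtain ⟨p, rfl⟩ : ∃ p, n = p + 1 := ⟨n - 1, by omega⟩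
  -- `ZMod (p + 1)` is `Fin (p + 1)` by definition
  exact ⟨SimpleGraph.circulantGraph s,
    fun v => (SimpleGraph.card_neighborSet_circulantGraph hs h0 v).trans hcard⟩
end

section
/- For all natural numbers k, ℓ, m, n with k ≤ n, ℓ ≤ m and k * m = ℓ * n, there exists a (k, ℓ)-biregular bipartite graph on a bipartition (P, Q) with |P| = m and |Q| = n. -/
/-!
Number the `k * m = ℓ * n` edge slots `0, …, k * m - 1`. Slot `x` joins `x / k ∈ P` to
`x % n ∈ Q`, so each vertex of `P` owns a block of `k` consecutive slots and each vertex
of `Q` owns the `ℓ` slots in its residue class. No edge is counted twice: two slots with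
the same quotient by `k` differ by less than `k ≤ n`, so they cannot share a residue mod `n`.
-/

open Function

namespace SimpleGraph

variable {P Q : Type*}

def bipartiteOfRel (r : P → Q → Prop) : SimpleGraph (P ⊕ Q) where
  Adj
    | .inl a, .inr b => r a b
    | .inr b, .inl a => r a b
    | _, _ => False
  symm := ⟨by rintro (_ | _) (_ | _) h <;> exact h⟩
  loopless := ⟨by rintro (_ | _) h <;> exact h⟩

end SimpleGraph

section Fibers

variable {X P Q : Type*} {p : X → P} {q : X → Q}

theorem Nat.card_image_fiber_of_injective (hpq : Injective fun x => (p x, q x)) (a : P) :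
    Nat.card {b | ∃ x, p x = a ∧ q x = b} = Nat.card {x | p x = a} :=
  Nat.card_image_of_injOn fun _ hx _ hy hxy => hpq (Prod.ext (hx.trans hy.symm) hxy)

theorem Nat.card_preimage_fiber_of_injective (hpq : Injective fun x => (p x, q x)) (b : Q) :
    Nat.card {a | ∃ x, p x = a ∧ q x = b} = Nat.card {x | q x = b} := by
  simp_rw [and_comm (a := p _ = _)]
  exact Nat.card_image_fiber_of_injective
    (fun x y hxy => hpq (Prod.ext (congrArg Prod.snd hxy) (congrArg Prod.fst hxy))) b

theorem Nat.card_fiber_fst_equiv {A B : Type*} (e : X ≃ A × B) (a : A) :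
    Nat.card {x | (e x).1 = a} = Nat.card B :=
  calc Nat.card {x | (e x).1 = a}
      = Nat.card ({a' // a' = a} × B) :=
        Nat.card_congr ((e.subtypeEquiv fun _ => Iff.rfl).trans
          (Equiv.prodSubtypeFstEquivSubtypeProd (p := (· = a))))
    _ = Nat.card B := by simp

theorem Nat.card_fiber_snd_equiv {A B : Type*} (e : X ≃ A × B) (b : B) :
    Nat.card {x | (e x).2 = b} = Nat.card A :=
  Nat.card_fiber_fst_equiv (e.trans (Equiv.prodComm A B)) b

end Fibers

/-- Each `x : X` is an edge from `(e₁ x).1` to `(e₂ x).2`; injectivity rules out multiple edges. -/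
theorem SimpleGraph.exists_biregular_of_equiv_prod {X P Q K L : Type*}
    (e₁ : X ≃ P × K) (e₂ : X ≃ L × Q) (hinj : Injective fun x => ((e₁ x).1, (e₂ x).2)) :
    ∃ G : SimpleGraph (P ⊕ Q),
      (∀ a b : P, ¬ G.Adj (Sum.inl a) (Sum.inl b)) ∧
      (∀ a b : Q, ¬ G.Adj (Sum.inr a) (Sum.inr b)) ∧
      (∀ a : P, Nat.card {b : Q | G.Adj (Sum.inl a) (Sum.inr b)} = Nat.card K) ∧
      (∀ b : Q, Nat.card {a : P | G.Adj (Sum.inl a) (Sum.inr b)} = Nat.card L) :=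
  ⟨bipartiteOfRel fun a b => ∃ x, (e₁ x).1 = a ∧ (e₂ x).2 = b, fun _ _ h => h, fun _ _ h => h,
    fun a => (Nat.card_image_fiber_of_injective hinj a).trans (Nat.card_fiber_fst_equiv e₁ a),
    fun b => (Nat.card_preimage_fiber_of_injective hinj b).trans (Nat.card_fiber_snd_equiv e₂ b)⟩

theorem Nat.eq_of_div_eq_of_mod_eq {k n x y : ℕ} (hk : 0 < k) (hkn : k ≤ n)
    (hdiv : x / k = y / k) (hmod : x % n = y % n) : x = y := by
  wlog hxy : x ≤ y generalizing x y
  · exact (this hdiv.symm hmod.symm (le_of_not_ge hxy)).symm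
  have hlt : y - x < n := by
    have := Nat.div_add_mod x k
    have := Nat.div_add_mod y k
    have := Nat.mod_lt y hk
    rw [hdiv] at *
    omega
  have hdvd : n ∣ y - x := (Nat.modEq_iff_dvd' hxy).1 hmod
  have := Nat.eq_zero_of_dvd_of_lt hdvd hlt
  omega

theorem stmt_4_general (k ℓ m n : ℕ) (hk : k ≤ n) (h : k * m = ℓ * n) :
    ∃ G : SimpleGraph (Fin m ⊕ Fin n),
      (∀ a b : Fin m, ¬ G.Adj (Sum.inl a) (Sum.inl b)) ∧
      (∀ a b : Fin n, ¬ G.Adj (Sum.inr a) (Sum.inr b)) ∧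
      (∀ a : Fin m, Nat.card {b : Fin n | G.Adj (Sum.inl a) (Sum.inr b)} = k) ∧
      (∀ b : Fin n, Nat.card {a : Fin m | G.Adj (Sum.inl a) (Sum.inr b)} = ℓ) := by
  let e₁ : Fin (m * k) ≃ Fin m × Fin k := finProdFinEquiv.symm
  let e₂ : Fin (m * k) ≃ Fin ℓ × Fin n :=
    (finCongr (by rw [mul_comm, h])).trans finProdFinEquiv.symm
  have hinj : Injective fun x => ((e₁ x).1, (e₂ x).2) := by
    intro x y hxy
    simp only [Prod.ext_iff, Fin.ext_iff] at hxy
    exact Fin.ext (Nat.eq_of_div_eq_of_mod_eq (Nat.pos_of_mul_pos_left x.pos) hk hxy.1 hxy.2)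
  simpa using SimpleGraph.exists_biregular_of_equiv_prod e₁ e₂ hinj

/-- For all `k ≤ n`, `ℓ ≤ m` with `k * m = ℓ * n`, there exists a
`(k, ℓ)`-biregular bipartite graph on a bipartition `(P, Q)` with `|P| = m`
and `|Q| = n`. -/
theorem stmt_4 (k ℓ m n : ℕ) (hk : k ≤ n) (hl : ℓ ≤ m) (h : k * m = ℓ * n) :
    ∃ G : SimpleGraph (Fin m ⊕ Fin n),
      (∀ a b : Fin m, ¬ G.Adj (Sum.inl a) (Sum.inl b)) ∧
      (∀ a b : Fin n, ¬ G.Adj (Sum.inr a) (Sum.inr b)) ∧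
      (∀ a : Fin m, Nat.card {b : Fin n | G.Adj (Sum.inl a) (Sum.inr b)} = k) ∧
      (∀ b : Fin n, Nat.card {a : Fin m | G.Adj (Sum.inl a) (Sum.inr b)} = ℓ) :=
  stmt_4_general k ℓ m n hk h
end

section
/- For all natural numbers k, ℓ, m, n with k ≤ n, ℓ ≤ m and k * m = ℓ * n, there exists a (k, ℓ)-biregular bipartite graph on bipartition (P, Q) with |P| = m, |Q| = n which admits an automorphism whose orbits are exactly P and Q (a doubly-circulant graph). -/
/-!
Write `m = m' d` and `n = n' d` with `d = gcd m n`. Since `m'` and `n'` are coprime,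
`k m' = ℓ n'` forces `k = n' c` and `ℓ = m' c` for some `c ≤ d`. Label both sides by residues
modulo `d`, fix any `c`-element set `S ⊆ ℤ/d`, and join `a ∈ P` to `b ∈ Q` when `b - a ∈ S`.
Every residue class has `m'` elements in `P` and `n'` in `Q`, so the degrees are `n' c = k` and
`m' c = ℓ`; rotating `P` and `Q` simultaneously adds `1` to every residue and so preserves edges.
-/

open Finset

theorem Finset.natCard_preimage_eq_card_mul {ι M : Type*} [Finite ι] {f : ι → M} {q : ℕ}
    (hf : ∀ z, Nat.card {a // f a = z} = q) (s : Finset M) :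
    Nat.card (f ⁻¹' s) = #s * q := by
  rw [card_preimage_eq_sum_card_image_eq fun _ _ => Set.toFinite _]
  simp [hf]

namespace SimpleGraph

variable {P Q Z : Type*} [AddGroup Z] {u : P → Z} {v : Q → Z} {S : Finset Z}

def differenceBipartite (u : P → Z) (v : Q → Z) (S : Finset Z) : SimpleGraph (P ⊕ Q) where
  Adj
    | .inl a, .inr b | .inr b, .inl a => v b - u a ∈ S
    | _, _ => False
  symm := ⟨by rintro (a | b) (a' | b') h <;> exact h⟩
  loopless := ⟨by rintro (a | b) h <;> exact h⟩

namespace differenceBipartite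

@[simp] theorem adj_inl_inr {a : P} {b : Q} :
    (differenceBipartite u v S).Adj (.inl a) (.inr b) ↔ v b - u a ∈ S := Iff.rfl

@[simp] theorem adj_inr_inl {a : P} {b : Q} :
    (differenceBipartite u v S).Adj (.inr b) (.inl a) ↔ v b - u a ∈ S := Iff.rfl

@[simp] theorem not_adj_inl_inl {a a' : P} :
    ¬ (differenceBipartite u v S).Adj (.inl a) (.inl a') := id

@[simp] theorem not_adj_inr_inr {b b' : Q} :
    ¬ (differenceBipartite u v S).Adj (.inr b) (.inr b') := id

theorem natCard_adj_inl [Finite Q] {q : ℕ} (hv : ∀ z, Nat.card {b // v b = z} = q) (a : P) :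
    Nat.card {b | (differenceBipartite u v S).Adj (.inl a) (.inr b)} = #S * q := by
  have : {b | (differenceBipartite u v S).Adj (.inl a) (.inr b)} =
      v ⁻¹' (S.map (Equiv.subRight (u a)).symm.toEmbedding) := by
    ext b
    rw [Set.mem_preimage, mem_coe, mem_map_equiv, Equiv.symm_symm]
    rfl
  rw [this, natCard_preimage_eq_card_mul hv, card_map]

theorem natCard_adj_inr [Finite P] {p : ℕ} (hu : ∀ z, Nat.card {a // u a = z} = p) (b : Q) :
    Nat.card {a | (differenceBipartite u v S).Adj (.inl a) (.inr b)} = #S * p := by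
  have : {a | (differenceBipartite u v S).Adj (.inl a) (.inr b)} =
      u ⁻¹' (S.map (Equiv.subLeft (v b)).symm.toEmbedding) := by
    ext a
    rw [Set.mem_preimage, mem_coe, mem_map_equiv, Equiv.symm_symm]
    rfl
  rw [this, natCard_preimage_eq_card_mul hu, card_map]

def shiftIso (σ : P ≃ P) (τ : Q ≃ Q) (t : Z) (hσ : ∀ a, u (σ a) = u a + t)
    (hτ : ∀ b, v (τ b) = v b + t) : differenceBipartite u v S ≃g differenceBipartite u v S where
  toEquiv := Equiv.sumCongr σ τ
  map_rel_iff' := by rintro (a | b) (a' | b') <;> simp [hσ, hτ]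

end differenceBipartite

end SimpleGraph

theorem Sum.iterate_map_inl {α β : Type*} (f : α → α) (g : β → β) (j : ℕ) (a : α) :
    (Sum.map f g)^[j] (.inl a) = .inl (f^[j] a) :=
  (Function.Semiconj.iterate_right (f := Sum.inl) (fun _ => rfl) j a).symm

theorem Sum.iterate_map_inr {α β : Type*} (f : α → α) (g : β → β) (j : ℕ) (b : β) :
    (Sum.map f g)^[j] (.inr b) = .inr (g^[j] b) :=
  (Function.Semiconj.iterate_right (f := Sum.inr) (fun _ => rfl) j b).symm

theorem Fin.natCard_natCast_val_eq (q d : ℕ) [NeZero d] (z : ZMod d) :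
    Nat.card {b : Fin (q * d) // ((b : ℕ) : ZMod d) = z} = q := by
  have hunique : Nat.card {y : Fin d // ((y : ℕ) : ZMod d) = z} = 1 := by
    refine Nat.card_eq_one_iff_exists.2 ⟨⟨⟨z.val, z.val_lt⟩, by simp⟩, ?_⟩
    rintro ⟨y, rfl⟩
    ext
    simp [ZMod.val_cast_of_lt y.isLt]
  calc Nat.card {b : Fin (q * d) // ((b : ℕ) : ZMod d) = z}
      = Nat.card ({y : Fin d // ((y : ℕ) : ZMod d) = z} × Fin q) :=
        Nat.card_congr <| (((Equiv.prodComm _ _).trans finProdFinEquiv).subtypeEquiv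
          fun p => by simp [finProdFinEquiv]).symm.trans Equiv.prodSubtypeFstEquivSubtypeProd
    _ = q := by rw [Nat.card_prod, hunique, Nat.card_eq_fintype_card, Fintype.card_fin, one_mul]

theorem natCast_val_finRotate {d n : ℕ} (hd : d ∣ n) (b : Fin n) :
    ((finRotate n b : ℕ) : ZMod d) = (b : ℕ) + 1 := by
  have := b.neZero
  rw [finRotate_apply, Fin.val_add, Fin.val_one', ← Nat.cast_add_one,
    ZMod.natCast_eq_natCast_iff', Nat.mod_mod_of_dvd _ hd, Nat.add_mod, Nat.mod_mod_of_dvd _ hd,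
    ← Nat.add_mod]

theorem exists_finRotate_iterate_eq {n : ℕ} (b b' : Fin n) : ∃ j, (finRotate n)^[j] b = b' := by
  have := b.neZero
  exact ⟨(b' - b).val, by rw [← finCycle_eq_finRotate_iterate, finCycle_apply, add_sub_cancel]⟩

theorem Nat.exists_biregular_parameters {k ℓ m n : ℕ} (hk : k ≤ n) (hl : ℓ ≤ m)
    (h : k * m = ℓ * n) :
    ∃ d m' n' c, 0 < d ∧ m = m' * d ∧ n = n' * d ∧ c ≤ d ∧ k = n' * c ∧ ℓ = m' * c := by
  rcases Nat.eq_zero_or_pos m with rfl | hm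
  · rcases Nat.eq_zero_or_pos n with rfl | hn
    · exact ⟨1, 0, 0, 0, by omega⟩
    · exact ⟨n, 0, 1, k, hn, by omega⟩
  rcases Nat.eq_zero_or_pos n with rfl | hn
  · exact ⟨m, 1, 0, ℓ, hm, by omega⟩
  obtain ⟨m', n', hcop, hm', hn'⟩ := Nat.exists_coprime m n
  set d := m.gcd n
  have hd : 0 < d := Nat.gcd_pos_of_pos_left n hm
  have hn'pos : 0 < n' := Nat.pos_of_mul_pos_right (hn'.symm ▸ hn)
  have hkm : k * m' = ℓ * n' := by
    apply Nat.eq_of_mul_eq_mul_right hd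
    rw [mul_assoc, mul_assoc, ← hm', ← hn', h]
  obtain ⟨c, rfl⟩ : n' ∣ k := hcop.symm.dvd_of_dvd_mul_right ⟨ℓ, by rw [hkm, mul_comm]⟩
  refine ⟨d, m', n', c, hd, hm', hn', ?_, rfl, ?_⟩
  · exact Nat.le_of_mul_le_mul_left (hn' ▸ hk) hn'pos
  · exact Nat.eq_of_mul_eq_mul_left hn'pos (by rw [mul_comm n', ← hkm]; ring)

open SimpleGraph in
/-- For all `k ≤ n`, `ℓ ≤ m` with `k * m = ℓ * n`, there exists a
`(k, ℓ)`-biregular bipartite graph on a bipartition `(P, Q)` with `|P| = m`,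
`|Q| = n`, admitting an automorphism whose orbits are exactly `P` and `Q`
(a doubly-circulant graph). -/
theorem stmt_5 (k ℓ m n : ℕ) (hk : k ≤ n) (hl : ℓ ≤ m) (h : k * m = ℓ * n) :
    ∃ (G : SimpleGraph (Fin m ⊕ Fin n)) (φ : G ≃g G),
      (∀ a b : Fin m, ¬ G.Adj (Sum.inl a) (Sum.inl b)) ∧
      (∀ a b : Fin n, ¬ G.Adj (Sum.inr a) (Sum.inr b)) ∧
      (∀ a : Fin m, Nat.card {b : Fin n | G.Adj (Sum.inl a) (Sum.inr b)} = k) ∧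
      (∀ b : Fin n, Nat.card {a : Fin m | G.Adj (Sum.inl a) (Sum.inr b)} = ℓ) ∧
      (∀ a : Fin m, ∃ a' : Fin m, φ (Sum.inl a) = Sum.inl a') ∧
      (∀ b : Fin n, ∃ b' : Fin n, φ (Sum.inr b) = Sum.inr b') ∧
      (∀ a a' : Fin m, ∃ j : ℕ, (fun x => φ x)^[j] (Sum.inl a) = Sum.inl a') ∧
      (∀ b b' : Fin n, ∃ j : ℕ, (fun x => φ x)^[j] (Sum.inr b) = Sum.inr b') := by
  obtain ⟨d, m', n', c, hd, rfl, rfl, hcd, rfl, rfl⟩ := Nat.exists_biregular_parameters hk hl h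
  have : NeZero d := ⟨hd.ne'⟩
  obtain ⟨S, -, hS⟩ := exists_subset_card_eq (s := (univ : Finset (ZMod d))) (by simpa using hcd)
  let φ := differenceBipartite.shiftIso (S := S)
    (u := fun a : Fin (m' * d) => ((a : ℕ) : ZMod d))
    (v := fun b : Fin (n' * d) => ((b : ℕ) : ZMod d))
    (finRotate _) (finRotate _) 1 (natCast_val_finRotate (dvd_mul_left d m'))
    (natCast_val_finRotate (dvd_mul_left d n'))
  refine ⟨_, φ, fun _ _ => differenceBipartite.not_adj_inl_inl,
    fun _ _ => differenceBipartite.not_adj_inr_inr, fun a => ?_, fun b => ?_,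
    fun a => ⟨_, rfl⟩, fun b => ⟨_, rfl⟩, fun a a' => ?_, fun b b' => ?_⟩
  · rw [differenceBipartite.natCard_adj_inl (Fin.natCard_natCast_val_eq n' d), hS, mul_comm]
  · rw [differenceBipartite.natCard_adj_inr (Fin.natCard_natCast_val_eq m' d), hS, mul_comm]
  · obtain ⟨j, rfl⟩ := exists_finRotate_iterate_eq a a'
    exact ⟨j, Sum.iterate_map_inl _ _ j a⟩
  · obtain ⟨j, rfl⟩ := exists_finRotate_iterate_eq b b'
    exact ⟨j, Sum.iterate_map_inr _ _ j b⟩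
end

section
/- For even n ≥ 2, the complete graph K_n admits a 1-factorization into n - 1 pairwise disjoint perfect matchings (Walecki's construction). -/
/-!
A 1-factorization of `K_V` is the same thing as a family of fixed-point-free involutions of `V`
such that any two distinct vertices are swapped by exactly one of them. Walecki's construction
on `Option G`, for an abelian group `G` in which doubling is bijective, is the family indexed by
`i : G` that swaps the centre `none` with `i` and reflects `a ↦ 2 • i - a` elsewhere: `i` is the
unique fixed point of the reflection, and `a ≠ b` are swapped exactly by the midpoint `i` of
`a + b = 2 • i`. For even `n`, take `G = Fin (n - 1)`, which has odd order.
-/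

open Function

namespace SimpleGraph

variable {ι V W : Type*}

def swapSubgraph (f : V → V) (hf : Involutive f) (hne : ∀ v, f v ≠ v) :
    (⊤ : SimpleGraph V).Subgraph where
  verts := Set.univ
  Adj v w := f v = w
  adj_sub {v _} h := h ▸ (hne v).symm
  edge_vert _ := trivial
  symm := ⟨fun _ _ h => h ▸ hf _⟩

@[simp]
theorem swapSubgraph_adj {f : V → V} {hf : Involutive f} {hne : ∀ v, f v ≠ v} {v w : V} :
    (swapSubgraph f hf hne).Adj v w ↔ f v = w :=
  Iff.rfl

theorem isPerfectMatching_swapSubgraph (f : V → V) (hf : Involutive f) (hne : ∀ v, f v ≠ v) :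
    (swapSubgraph f hf hne).IsPerfectMatching :=
  Subgraph.isPerfectMatching_iff.mpr fun _ => existsUnique_eq'

structure IsSwapFactorization (σ : ι → V → V) : Prop where
  involutive : ∀ i, Involutive (σ i)
  apply_ne : ∀ i v, σ i v ≠ v
  existsUnique_apply_eq : ∀ v w, v ≠ w → ∃! i, σ i v = w

namespace IsSwapFactorization

variable {σ : ι → V → V}

theorem conj (hσ : IsSwapFactorization σ) (e : V ≃ W) :
    IsSwapFactorization fun i => e ∘ σ i ∘ e.symm where
  involutive i w := by simp [hσ.involutive i _]
  apply_ne i w := by simpa [← e.eq_symm_apply] using hσ.apply_ne i (e.symm w)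
  existsUnique_apply_eq v w hvw := by
    simpa [← e.eq_symm_apply] using
      hσ.existsUnique_apply_eq (e.symm v) (e.symm w) (e.symm.injective.ne hvw)

theorem exists_perfectMatchings (hσ : IsSwapFactorization σ) :
    ∃ M : ι → (⊤ : SimpleGraph V).Subgraph,
      (∀ i, (M i).IsPerfectMatching) ∧
      (∀ i j, i ≠ j → Disjoint (M i).edgeSet (M j).edgeSet) ∧
      (∀ e ∈ (⊤ : SimpleGraph V).edgeSet, ∃ i, e ∈ (M i).edgeSet) := by
  refine ⟨fun i => swapSubgraph (σ i) (hσ.involutive i) (hσ.apply_ne i),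
    fun i => isPerfectMatching_swapSubgraph _ _ _, fun i j hij => ?_, fun e he => ?_⟩
  · refine Set.disjoint_left.mpr fun e hi hj => ?_
    induction e with
    | h v w =>
      simp only [Subgraph.mem_edgeSet, swapSubgraph_adj] at hi hj
      exact hij ((hσ.existsUnique_apply_eq v w (hi ▸ hσ.apply_ne i v).symm).unique hi hj)
  · induction e with
    | h v w => simpa using (hσ.existsUnique_apply_eq v w he).exists

end IsSwapFactorization

end SimpleGraph

section Walecki

variable {G : Type*} [AddCommGroup G] [DecidableEq G]

def waleckiSwap (i : G) : Option G → Option G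
  | none => some i
  | some a => if a = i then none else some (2 • i - a)

theorem waleckiSwap_some_eq_none {i a : G} : waleckiSwap i (some a) = none ↔ a = i := by
  by_cases h : a = i <;> simp [waleckiSwap, h]

theorem waleckiSwap_some_eq_some {i a b : G} :
    waleckiSwap i (some a) = some b ↔ a ≠ i ∧ 2 • i = a + b := by
  by_cases h : a = i <;> simp [waleckiSwap, h, sub_eq_iff_eq_add']

theorem waleckiSwap_involutive (i : G) : Involutive (waleckiSwap i) := by
  rintro (_ | a)
  · simp [waleckiSwap]
  · by_cases h : a = i
    · simp [waleckiSwap, h]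
    · have : 2 • i - a ≠ i := by
        rwa [Ne, sub_eq_iff_eq_add', two_nsmul, add_left_inj, eq_comm]
      simp [waleckiSwap, h, this]

theorem isSwapFactorization_waleckiSwap (hG : Bijective fun x : G => 2 • x) :
    SimpleGraph.IsSwapFactorization (waleckiSwap (G := G)) where
  involutive := waleckiSwap_involutive
  apply_ne i := by
    rintro (_ | a) h
    · cases h
    · obtain ⟨hai, hdouble⟩ := waleckiSwap_some_eq_some.mp h
      exact hai (hG.1 (hdouble.trans (two_nsmul a).symm)).symm
  existsUnique_apply_eq := by
    rintro (_ | a) (_ | b) hab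
    · exact absurd rfl hab
    · exact ⟨b, rfl, fun j h => Option.some_injective _ h⟩
    · simp only [waleckiSwap_some_eq_none, existsUnique_eq']
    · obtain ⟨i, hi⟩ := hG.2 (a + b)
      simp only [waleckiSwap_some_eq_some]
      refine ⟨i, ⟨?_, hi⟩, fun j hj => hG.1 (hj.2.trans hi.symm)⟩
      rintro rfl
      exact hab (congrArg some (by simpa [two_nsmul] using hi))

end Walecki

/-- For even `n ≥ 2`, the complete graph `K_n` admits a 1-factorization into
`n - 1` pairwise disjoint perfect matchings (Walecki's construction). -/
theorem stmt_7 (n : ℕ) (hn : Even n) (h2 : 2 ≤ n) :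
    ∃ M : Fin (n - 1) → (⊤ : SimpleGraph (Fin n)).Subgraph,
      (∀ i, (M i).IsPerfectMatching) ∧
      (∀ i j, i ≠ j → Disjoint (M i).edgeSet (M j).edgeSet) ∧
      (∀ e ∈ (⊤ : SimpleGraph (Fin n)).edgeSet, ∃ i, e ∈ (M i).edgeSet) := by
  obtain ⟨m, rfl⟩ : ∃ m, n = m + 1 := ⟨n - 1, by omega⟩
  have hm : Odd m := by simpa [Nat.even_add_one] using hn
  have : NeZero m := ⟨hm.pos.ne'⟩
  have hdouble : Bijective fun x : Fin m => 2 • x :=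
    (nsmulCoprime (by simpa using hm : (Nat.card (Fin m)).Coprime 2)).bijective
  rw [Nat.add_sub_cancel]
  exact ((isSwapFactorization_waleckiSwap hdouble).conj (finSuccEquiv m).symm)
    |>.exists_perfectMatchings
end

section
/- There is exactly one regular tournament on 3 vertices and exactly one regular tournament on 5 vertices, up to isomorphism; for every odd n > 5 there exist at least two non-isomorphic regular tournaments on n vertices. -/
/-- `r` is a tournament on `Fin n`: an orientation of the complete graph. -/
def IsTournament {n : ℕ} (r : Fin n → Fin n → Prop) : Prop :=
  (∀ v, ¬ r v v) ∧ ∀ u v : Fin n, u ≠ v → (r u v ↔ ¬ r v u)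

/-- `r` is a regular tournament on `Fin n`: every vertex has out-degree `(n-1)/2`. -/
def IsRegularTournament {n : ℕ} (r : Fin n → Fin n → Prop) : Prop :=
  IsTournament r ∧ ∀ v : Fin n, Nat.card {w : Fin n | r v w} = (n - 1) / 2

/-- Isomorphism of tournaments on `Fin n`. -/
def TournamentIso {n : ℕ} (r r' : Fin n → Fin n → Prop) : Prop :=
  ∃ e : Equiv.Perm (Fin n), ∀ u v : Fin n, r u v ↔ r' (e u) (e v)

/-! ### Auxiliary machinery -/

section Aux

lemma natCard_filter {k : ℕ} (P : Fin k → Prop) [DecidablePred P] :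
    Nat.card {w | P w} = (Finset.univ.filter P).card := by
  rw [Nat.card_eq_fintype_card, Fintype.card_subtype]
  rfl

/-- Cyclic distance from `u` to `v` in `Fin n`. -/
def D {n : ℕ} (u v : Fin n) : ℕ := (v.val + n - u.val) % n

lemma D_lt {n : ℕ} (u v : Fin n) : D u v < n := Nat.mod_lt _ u.pos

lemma D_self {n : ℕ} (u : Fin n) : D u u = 0 := by
  have : u.val + n - u.val = n := by omega
  simp [D, this]

lemma D_eq_zero {n : ℕ} {u v : Fin n} (h : D u v = 0) : u = v := by
  have hu := u.isLt; have hv := v.isLt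
  unfold D at h
  have h2 : v.val + n - u.val = 0 ∨ v.val + n - u.val = n := by
    rcases Nat.lt_or_ge (v.val + n - u.val) n with h' | h'
    · left; rw [Nat.mod_eq_of_lt h'] at h; omega
    · right
      rw [Nat.mod_eq_sub_mod h', Nat.mod_eq_of_lt (by omega)] at h
      omega
  apply Fin.ext; omega

lemma D_add_rev {n : ℕ} {u v : Fin n} (h : u ≠ v) : D u v + D v u = n := by
  have hu := u.isLt; have hv := v.isLt
  have hne : u.val ≠ v.val := fun hh => h (Fin.ext hh)
  unfold D
  rcases Nat.lt_or_ge u.val v.val with h' | h'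
  · rw [Nat.mod_eq_sub_mod (by omega), Nat.mod_eq_of_lt (by omega),
      Nat.mod_eq_of_lt (by omega)]
    omega
  · rw [Nat.mod_eq_of_lt (by omega), Nat.mod_eq_sub_mod (by omega),
      Nat.mod_eq_of_lt (by omega)]
    omega

lemma D_add {n : ℕ} (u : Fin n) (s : ℕ) (hs : s < n) :
    D u ⟨(u.val + s) % n, Nat.mod_lt _ u.pos⟩ = s := by
  have hu := u.isLt
  show ((u.val + s) % n + n - u.val) % n = s
  have h1 : (u.val + s) % n + n - u.val = (u.val + s) % n + (n - u.val) := by omega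
  rw [h1, Nat.mod_add_mod]
  have h2 : u.val + s + (n - u.val) = s + n := by omega
  rw [h2, Nat.add_mod_right, Nat.mod_eq_of_lt hs]

lemma D_triangle {n : ℕ} (u v w : Fin n) : (D u v + D v w) % n = D u w := by
  have hu := u.isLt; have hv := v.isLt; have hw := w.isLt
  unfold D
  conv_lhs => rw [← Nat.add_mod]
  have h2 : v.val + n - u.val + (w.val + n - v.val) = (w.val + n - u.val) + n := by omega
  rw [h2, Nat.add_mod_right]

/-- Rotational (circulant) tournament with symbol set `S`. -/
def rot (n : ℕ) (S : Finset ℕ) : Fin n → Fin n → Prop := fun u v => D u v ∈ S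

instance {n : ℕ} {S : Finset ℕ} (u v : Fin n) : Decidable (rot n S u v) := by
  unfold rot; infer_instance

lemma rot_regular {n : ℕ} {S : Finset ℕ}
    (hpos : ∀ s ∈ S, 0 < s ∧ s < n)
    (hco : ∀ d, 0 < d → d < n → (d ∈ S ↔ (n - d) ∉ S))
    (hcard : S.card = (n - 1) / 2) :
    IsRegularTournament (rot n S) := by
  refine ⟨⟨fun v hv => ?_, fun u v huv => ?_⟩, fun v => ?_⟩
  · rw [rot, D_self] at hv
    exact absurd (hpos 0 hv).1 (lt_irrefl 0)
  · have h1 : 0 < D u v := Nat.pos_of_ne_zero (fun h => huv (D_eq_zero h))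
    have h2 := D_add_rev huv
    have h3 : D v u = n - D u v := by omega
    rw [rot, rot, h3]
    exact hco _ h1 (D_lt u v)
  · classical
    rw [← hcard, natCard_filter]
    refine Finset.card_bij' (fun w _ => D v w)
      (fun s hs => ⟨(v.val + s) % n, Nat.mod_lt _ v.pos⟩) ?_ ?_ ?_ ?_
    · intro a ha; simpa [rot] using ha
    · intro s hs
      simp only [Finset.mem_filter, Finset.mem_univ, true_and, rot]
      rw [D_add v s (hpos s hs).2]; exact hs
    · intro a ha
      apply Fin.ext
      show (v.val + (a.val + n - v.val) % n) % n = a.val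
      rw [Nat.add_mod_mod]
      have h4 : v.val + (a.val + n - v.val) = a.val + n := by
        have := v.isLt; omega
      rw [h4, Nat.add_mod_right, Nat.mod_eq_of_lt a.isLt]
    · intro s hs
      exact D_add v s (hpos s hs).2

/-- The invariant: existence of two vertices with no common out-neighbour. -/
def Q {n : ℕ} (r : Fin n → Fin n → Prop) : Prop :=
  ∃ u v : Fin n, u ≠ v ∧ ∀ w, ¬ (r u w ∧ r v w)

lemma iso_Q {n : ℕ} {r r' : Fin n → Fin n → Prop} (h : TournamentIso r r') (hq : Q r) :
    Q r' := by
  obtain ⟨e, he⟩ := h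
  obtain ⟨u, v, huv, hw⟩ := hq
  refine ⟨e u, e v, fun hh => huv (e.injective hh), fun w hh => ?_⟩
  have h1 : r u (e.symm w) := (he u (e.symm w)).2 (by simpa using hh.1)
  have h2 : r v (e.symm w) := (he v (e.symm w)).2 (by simpa using hh.2)
  exact hw _ ⟨h1, h2⟩

lemma mod_helper {a t n : ℕ} (h : a = t + n ∨ a = t) (ht : t < n) : a % n = t := by
  rcases h with rfl | rfl
  · rw [Nat.add_mod_right, Nat.mod_eq_of_lt ht]
  · exact Nat.mod_eq_of_lt ht

lemma Q_bigR {m : ℕ} (hm : 1 ≤ m) : Q (rot (2*m+1) (Finset.Icc 1 m)) := by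
  set n := 2*m+1 with hn
  refine ⟨⟨0, by omega⟩, ⟨m, by omega⟩,
    fun hh => by simp [Fin.ext_iff] at hh; omega, fun w hh => ?_⟩
  obtain ⟨h1, h2⟩ := hh
  rw [rot, Finset.mem_Icc] at h1 h2
  have hw := w.isLt
  have hd1 : D (⟨0, by omega⟩ : Fin n) w = w.val := by
    show (w.val + n - 0) % n = w.val
    have : w.val + n - 0 = w.val + n := by omega
    rw [this, Nat.add_mod_right, Nat.mod_eq_of_lt hw]
  rw [hd1] at h1
  have hd2 : D (⟨m, by omega⟩ : Fin n) w = (w.val + n - m) % n := rfl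
  rw [hd2] at h2
  rcases Nat.lt_or_ge (w.val + n - m) n with h' | h'
  · rw [Nat.mod_eq_of_lt h'] at h2; omega
  · have : w.val + n - m = m + n ∨ (w.val + n - m = 0 + n ∧ w.val = m) := by omega
    rcases this with h'' | ⟨h'', _⟩ <;> rw [mod_helper (Or.inl h'') (by omega)] at h2 <;> omega

lemma notQ_bigR' {m : ℕ} (hm : 4 ≤ m) :
    ¬ Q (rot (2*m+1) (insert (2*m) (Finset.Icc 2 m))) := by
  set n := 2*m+1 with hn
  set S' := insert (2*m) (Finset.Icc 2 m) with hS'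
  rintro ⟨u, v, huv, hw⟩
  set δ := D u v with hδ
  have hδ1 : 0 < δ := Nat.pos_of_ne_zero (fun h => huv (D_eq_zero h))
  have hδ2 : δ < n := D_lt u v
  have hrev : D v u = n - δ := by have := D_add_rev huv; omega
  have key : ∃ s t, (s = 2*m ∨ (2 ≤ s ∧ s ≤ m)) ∧ (t = 2*m ∨ (2 ≤ t ∧ t ≤ m)) ∧
      (n - δ + s) % n = t := by
    rcases le_or_gt δ (m-2) with h | h
    · exact ⟨δ+2, 2, by omega, by omega, mod_helper (by omega) (by omega)⟩
    rcases le_or_gt δ (m+1) with h2 | h2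
    · exact ⟨δ-1, 2*m, by omega, by omega, mod_helper (by omega) (by omega)⟩
    rcases le_or_gt δ (2*m-2) with h3 | h3
    · exact ⟨2*m, 2*m-δ, by omega, by omega, mod_helper (by omega) (by omega)⟩
    rcases le_or_gt δ (2*m-1) with h4 | h4
    · exact ⟨2, 4, by omega, by omega, mod_helper (by omega) (by omega)⟩
    · exact ⟨2, 3, by omega, by omega, mod_helper (by omega) (by omega)⟩
  obtain ⟨s, t, hs, ht, hst⟩ := key
  have hsn : s < n := by omega
  set w : Fin n := ⟨(u.val + s) % n, Nat.mod_lt _ u.pos⟩ with hwdef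
  have h1 : D u w = s := D_add u s hsn
  have h2 : D v w = t := by
    have := D_triangle v u w
    rw [h1, hrev] at this
    rw [← this, hst]
  refine hw w ⟨?_, ?_⟩
  · show D u w ∈ S'
    rw [h1, hS']; simp only [Finset.mem_insert, Finset.mem_Icc]; omega
  · show D v w ∈ S'
    rw [h2, hS']; simp only [Finset.mem_insert, Finset.mem_Icc]; omega

end Aux

/-! ### Boolean encodings for small uniqueness -/

section Small

def pidx (n : ℕ) (u v : Fin n) : ℕ :=
  u.val * n - u.val * (u.val + 1) / 2 + v.val - u.val - 1

def pid5 (u v : Fin 5) : Fin 10 := ⟨pidx 5 u v % 10, by omega⟩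
def pid3 (u v : Fin 3) : Fin 3 := ⟨pidx 3 u v % 3, by omega⟩

def dec5 (f : Fin 10 → Bool) : Fin 5 → Fin 5 → Bool := fun u v =>
  if u < v then f (pid5 u v)
  else if v < u then ! f (pid5 v u)
  else false

def dec3 (f : Fin 3 → Bool) : Fin 3 → Fin 3 → Bool := fun u v =>
  if u < v then f (pid3 u v)
  else if v < u then ! f (pid3 v u)
  else false

def fst5 : Fin 10 → Fin 5 := ![0,0,0,0,1,1,1,2,2,3]
def snd5 : Fin 10 → Fin 5 := ![1,2,3,4,2,3,4,3,4,4]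
def fst3 : Fin 3 → Fin 3 := ![0,0,1]
def snd3 : Fin 3 → Fin 3 := ![1,2,2]

lemma pid5_spec : ∀ u v : Fin 5, u < v → fst5 (pid5 u v) = u ∧ snd5 (pid5 u v) = v := by
  decide

lemma pid3_spec : ∀ u v : Fin 3, u < v → fst3 (pid3 u v) = u ∧ snd3 (pid3 u v) = v := by
  decide

def C5 : Fin 5 → Fin 5 → Bool := fun u v => decide (D u v = 1 ∨ D u v = 2)
def C3 : Fin 3 → Fin 3 → Bool := fun u v => decide (D u v = 1)

def regB5 (B : Fin 5 → Fin 5 → Bool) : Prop :=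
  ∀ v : Fin 5,
    (B v 0).toNat + (B v 1).toNat + (B v 2).toNat + (B v 3).toNat + (B v 4).toNat = 2

def regB3 (B : Fin 3 → Fin 3 → Bool) : Prop :=
  ∀ v : Fin 3, (B v 0).toNat + (B v 1).toNat + (B v 2).toNat = 1

def isoB5 (B C : Fin 5 → Fin 5 → Bool) : Prop :=
  ∃ a0 a1 a2 a3 a4 : Fin 5,
    (∀ i j : Fin 5, ![a0,a1,a2,a3,a4] i = ![a0,a1,a2,a3,a4] j → i = j) ∧
    ∀ u v : Fin 5, B u v = C (![a0,a1,a2,a3,a4] u) (![a0,a1,a2,a3,a4] v)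

def isoB3 (B C : Fin 3 → Fin 3 → Bool) : Prop :=
  ∃ a0 a1 a2 : Fin 3,
    (∀ i j : Fin 3, ![a0,a1,a2] i = ![a0,a1,a2] j → i = j) ∧
    ∀ u v : Fin 3, B u v = C (![a0,a1,a2] u) (![a0,a1,a2] v)

set_option maxRecDepth 100000 in
lemma key5 : ∀ b0 b1 b2 b3 b4 b5 b6 b7 b8 b9 : Bool,
    regB5 (dec5 ![b0,b1,b2,b3,b4,b5,b6,b7,b8,b9]) →
    isoB5 (dec5 ![b0,b1,b2,b3,b4,b5,b6,b7,b8,b9]) C5 := by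
  unfold regB5 isoB5; decide

set_option maxRecDepth 100000 in
lemma key3 : ∀ b0 b1 b2 : Bool,
    regB3 (dec3 ![b0,b1,b2]) → isoB3 (dec3 ![b0,b1,b2]) C3 := by
  unfold regB3 isoB3; decide

lemma dec5_congr {f g : Fin 10 → Bool} (h : ∀ i, f i = g i) (u v : Fin 5) :
    dec5 f u v = dec5 g u v := by
  unfold dec5; simp only [h]

lemma dec3_congr {f g : Fin 3 → Bool} (h : ∀ i, f i = g i) (u v : Fin 3) :
    dec3 f u v = dec3 g u v := by
  unfold dec3; simp only [h]

lemma vec10_eval (f : Fin 10 → Bool) :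
    ∀ i, ![f 0, f 1, f 2, f 3, f 4, f 5, f 6, f 7, f 8, f 9] i = f i := by
  intro i; fin_cases i <;> rfl

lemma vec3_eval (f : Fin 3 → Bool) : ∀ i, ![f 0, f 1, f 2] i = f i := by
  intro i; fin_cases i <;> rfl

lemma boolcard5 (g : Fin 5 → Bool) :
    (Finset.univ.filter (fun w => g w = true)).card =
      (g 0).toNat + (g 1).toNat + (g 2).toNat + (g 3).toNat + (g 4).toNat := by
  have h : ∀ b : Bool, (if b = true then 1 else 0) = b.toNat := by decide
  rw [Finset.card_filter, Fin.sum_univ_five]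
  simp only [h]

lemma boolcard3 (g : Fin 3 → Bool) :
    (Finset.univ.filter (fun w => g w = true)).card =
      (g 0).toNat + (g 1).toNat + (g 2).toNat := by
  have h : ∀ b : Bool, (if b = true then 1 else 0) = b.toNat := by decide
  rw [Finset.card_filter, Fin.sum_univ_three]
  simp only [h]

lemma canon5 (r : Fin 5 → Fin 5 → Prop) (hr : IsRegularTournament r) :
    ∃ e : Equiv.Perm (Fin 5), ∀ u v, r u v ↔ (C5 (e u) (e v) = true) := by
  classical
  obtain ⟨⟨hirr, hasym⟩, hdeg⟩ := hr
  set B : Fin 5 → Fin 5 → Bool := fun u v => decide (r u v) with hBdef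
  have hB : ∀ u v, B u v = true ↔ r u v := by intro u v; simp [hBdef]
  set f : Fin 10 → Bool := fun i => B (fst5 i) (snd5 i) with hfdef
  have hpoint : ∀ u v, dec5 f u v = B u v := by
    intro u v
    rcases lt_trichotomy u v with h | h | h
    · have hp := pid5_spec u v h
      simp only [dec5, if_pos h, hfdef, hp.1, hp.2]
    · subst h
      have : ¬ u < u := lt_irrefl u
      simp only [dec5, if_neg this]
      have : B u u = false := by
        rw [← Bool.not_eq_true]; rw [hB]; exact hirr u
      rw [this]
    · have hlt : ¬ u < v := not_lt_of_gt h
      have hp := pid5_spec v u h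
      simp only [dec5, if_neg hlt, if_pos h, hfdef, hp.1, hp.2]
      have hne : u ≠ v := ne_of_gt h
      have hiff : (B u v = true) ↔ ¬ (B v u = true) := by
        rw [hB, hB]; exact hasym u v hne
      cases h1 : B v u <;> cases h2 : B u v <;> simp [h1, h2] at hiff ⊢
  have hvec : ∀ u v, dec5 ![f 0, f 1, f 2, f 3, f 4, f 5, f 6, f 7, f 8, f 9] u v = B u v := by
    intro u v
    rw [dec5_congr (vec10_eval f) u v]
    exact hpoint u v
  have hreg : regB5 (dec5 ![f 0, f 1, f 2, f 3, f 4, f 5, f 6, f 7, f 8, f 9]) := by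
    intro v
    simp only [hvec]
    rw [← boolcard5 (fun w => B v w)]
    have hset : {w : Fin 5 | r v w} = {w : Fin 5 | B v w = true} := by
      ext w; exact ((hB v w).symm : r v w ↔ _)
    have := hdeg v
    rw [hset, natCard_filter (fun w => B v w = true)] at this
    simpa using this
  obtain ⟨a0, a1, a2, a3, a4, hinj, hiso⟩ :=
    key5 (f 0) (f 1) (f 2) (f 3) (f 4) (f 5) (f 6) (f 7) (f 8) (f 9) hreg
  set g : Fin 5 → Fin 5 := ![a0,a1,a2,a3,a4] with hgdef
  have hbij : Function.Bijective g :=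
    Finite.injective_iff_bijective.mp (fun i j h => hinj i j h)
  refine ⟨Equiv.ofBijective g hbij, fun u v => ?_⟩
  have h1 : B u v = C5 (g u) (g v) := by rw [← hvec u v]; exact hiso u v
  rw [← hB u v, h1]
  rfl

lemma canon3 (r : Fin 3 → Fin 3 → Prop) (hr : IsRegularTournament r) :
    ∃ e : Equiv.Perm (Fin 3), ∀ u v, r u v ↔ (C3 (e u) (e v) = true) := by
  classical
  obtain ⟨⟨hirr, hasym⟩, hdeg⟩ := hr
  set B : Fin 3 → Fin 3 → Bool := fun u v => decide (r u v) with hBdef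
  have hB : ∀ u v, B u v = true ↔ r u v := by intro u v; simp [hBdef]
  set f : Fin 3 → Bool := fun i => B (fst3 i) (snd3 i) with hfdef
  have hpoint : ∀ u v, dec3 f u v = B u v := by
    intro u v
    rcases lt_trichotomy u v with h | h | h
    · have hp := pid3_spec u v h
      simp only [dec3, if_pos h, hfdef, hp.1, hp.2]
    · subst h
      have : ¬ u < u := lt_irrefl u
      simp only [dec3, if_neg this]
      have : B u u = false := by
        rw [← Bool.not_eq_true]; rw [hB]; exact hirr u
      rw [this]
    · have hlt : ¬ u < v := not_lt_of_gt h
      have hp := pid3_spec v u h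
      simp only [dec3, if_neg hlt, if_pos h, hfdef, hp.1, hp.2]
      have hne : u ≠ v := ne_of_gt h
      have hiff : (B u v = true) ↔ ¬ (B v u = true) := by
        rw [hB, hB]; exact hasym u v hne
      cases h1 : B v u <;> cases h2 : B u v <;> simp [h1, h2] at hiff ⊢
  have hvec : ∀ u v, dec3 ![f 0, f 1, f 2] u v = B u v := by
    intro u v
    rw [dec3_congr (vec3_eval f) u v]
    exact hpoint u v
  have hreg : regB3 (dec3 ![f 0, f 1, f 2]) := by
    intro v
    simp only [hvec]
    rw [← boolcard3 (fun w => B v w)]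
    have hset : {w : Fin 3 | r v w} = {w : Fin 3 | B v w = true} := by
      ext w; exact ((hB v w).symm : r v w ↔ _)
    have := hdeg v
    rw [hset, natCard_filter (fun w => B v w = true)] at this
    simpa using this
  obtain ⟨a0, a1, a2, hinj, hiso⟩ := key3 (f 0) (f 1) (f 2) hreg
  set g : Fin 3 → Fin 3 := ![a0,a1,a2] with hgdef
  have hbij : Function.Bijective g :=
    Finite.injective_iff_bijective.mp (fun i j h => hinj i j h)
  refine ⟨Equiv.ofBijective g hbij, fun u v => ?_⟩
  have h1 : B u v = C3 (g u) (g v) := by rw [← hvec u v]; exact hiso u v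
  rw [← hB u v, h1]
  rfl

end Small

/-! ### Main theorem -/

/-- There is exactly one regular tournament on 3 vertices and exactly one on
5 vertices, up to isomorphism; for every odd `n > 5` there are at least two
non-isomorphic regular tournaments on `n` vertices. -/
theorem stmt_12 :
    (∃ r : Fin 3 → Fin 3 → Prop, IsRegularTournament r) ∧
    (∀ r r' : Fin 3 → Fin 3 → Prop,
      IsRegularTournament r → IsRegularTournament r' → TournamentIso r r') ∧
    (∃ r : Fin 5 → Fin 5 → Prop, IsRegularTournament r) ∧
    (∀ r r' : Fin 5 → Fin 5 → Prop,
      IsRegularTournament r → IsRegularTournament r' → TournamentIso r r') ∧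
    (∀ n : ℕ, Odd n → 5 < n →
      ∃ r r' : Fin n → Fin n → Prop,
        IsRegularTournament r ∧ IsRegularTournament r' ∧ ¬ TournamentIso r r') := by
  refine ⟨?_, ?_, ?_, ?_, ?_⟩
  · exact ⟨rot 3 {1}, rot_regular (by decide)
      (fun d h1 h2 => by interval_cases d <;> decide) (by decide)⟩
  · intro r r' hr hr'
    obtain ⟨e, he⟩ := canon3 r hr
    obtain ⟨e', he'⟩ := canon3 r' hr'
    refine ⟨e.trans e'.symm, fun u v => ?_⟩
    show _ ↔ r' (e'.symm (e u)) (e'.symm (e v))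
    have h2 := he' (e'.symm (e u)) (e'.symm (e v))
    simp only [Equiv.apply_symm_apply] at h2
    exact (he u v).trans h2.symm
  · exact ⟨rot 5 {1, 2}, rot_regular (by decide)
      (fun d h1 h2 => by interval_cases d <;> decide) (by decide)⟩
  · intro r r' hr hr'
    obtain ⟨e, he⟩ := canon5 r hr
    obtain ⟨e', he'⟩ := canon5 r' hr'
    refine ⟨e.trans e'.symm, fun u v => ?_⟩
    show _ ↔ r' (e'.symm (e u)) (e'.symm (e v))
    have h2 := he' (e'.symm (e u)) (e'.symm (e v))
    simp only [Equiv.apply_symm_apply] at h2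
    exact (he u v).trans h2.symm
  · intro n hodd hn
    obtain ⟨m, hm⟩ := hodd
    have hm3 : 3 ≤ m := by omega
    have hneq : n = 2 * m + 1 := by omega
    subst hneq
    rcases eq_or_lt_of_le hm3 with h3 | h4
    · -- n = 7
      have hmeq : m = 3 := h3.symm
      subst hmeq
      refine ⟨rot 7 (Finset.Icc 1 3), rot 7 {1, 2, 4}, ?_, ?_, ?_⟩
      · exact rot_regular (by decide)
          (fun d h1 h2 => by interval_cases d <;> decide) (by decide)
      · exact rot_regular (by decide)
          (fun d h1 h2 => by interval_cases d <;> decide) (by decide)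
      · intro hiso
        have hq : Q (rot 7 (Finset.Icc 1 3)) := Q_bigR (m := 3) (by norm_num)
        have hq' : Q (rot 7 ({1, 2, 4} : Finset ℕ)) := iso_Q hiso hq
        revert hq'
        unfold Q
        decide
    · -- m ≥ 4
      have hm4 : 4 ≤ m := h4
      refine ⟨rot (2*m+1) (Finset.Icc 1 m),
        rot (2*m+1) (insert (2*m) (Finset.Icc 2 m)), ?_, ?_, ?_⟩
      · refine rot_regular ?_ ?_ ?_
        · intro s hs; rw [Finset.mem_Icc] at hs; omega
        · intro d h1 h2
          simp only [Finset.mem_Icc]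
          omega
        · rw [Nat.card_Icc]; omega
      · refine rot_regular ?_ ?_ ?_
        · intro s hs
          simp only [Finset.mem_insert, Finset.mem_Icc] at hs; omega
        · intro d h1 h2
          simp only [Finset.mem_insert, Finset.mem_Icc]
          omega
        · rw [Finset.card_insert_of_notMem (by simp [Finset.mem_Icc]; omega),
            Nat.card_Icc]
          omega
      · intro hiso
        exact notQ_bigR' hm4 (iso_Q hiso (Q_bigR (by omega)))
end

section
/- If a connected finite simple bipartite graph is (k, ℓ)-biregular on bipartition (P, Q) with k ≥ 2 and ℓ ≥ 2, k ≤ |Q|/2 and ℓ ≤ |P|/2, then there exists a disconnected (k, ℓ)-biregular graph on the same bipartition (P, Q); hence the two graphs are non-isomorphic but have the same degree data. -/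
/-!
Double counting the edges of `G` gives `|P| k = |Q| ℓ`. Take a complete bipartite `K_{ℓ,k}` on
`ℓ` vertices of `P` and `k` vertices of `Q`; the remaining `p = |P| - ℓ` and `q = |Q| - k`
vertices still satisfy `p k = q ℓ` and `k ≤ q`. Number them and join `i < p` to `j < q` whenever
some `t < p k` has `t / k = i` and `t % q = j`. The `k` numbers with quotient `i` have distinct
residues mod `q` because `k ≤ q`, and the `ℓ` numbers below `q ℓ` with residue `j` have distinct
quotients by `k` for the same reason, so this part is `(k, ℓ)`-biregular too. The union has no
edge between the two parts, so it is disconnected and hence not isomorphic to `G`.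
-/

open Set

theorem Nat.eq_of_div_eq_of_mod_eq_s16 {a b k q : ℕ} (hk : 0 < k) (hkq : k ≤ q)
    (hdiv : a / k = b / k) (hmod : a % q = b % q) : a = b := by
  -- `a` and `b` lie in the same block of `k` consecutive numbers, so they differ by less than `q`.
  refine Nat.ModEq.eq_of_abs_lt hmod ?_
  have ha := Nat.div_add_mod a k
  have hb := Nat.div_add_mod b k
  have := Nat.mod_lt a hk
  have := Nat.mod_lt b hk
  rw [hdiv] at ha
  rw [abs_sub_lt_iff]
  omega

theorem Nat.ncard_setOf_div_eq {k : ℕ} (hk : 0 < k) (i : ℕ) : {t | t / k = i}.ncard = k := by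
  have : {t | t / k = i} = Ico (i * k) (i * k + k) := by
    ext t
    simp only [mem_ofPred_eq, mem_Ico, Nat.div_eq_iff hk]
    omega
  rw [this, ncard_Ico_nat, Nat.add_sub_cancel_left]

theorem Nat.ncard_setOf_lt_mul_and_mod_eq {q j : ℕ} (hj : j < q) (ℓ : ℕ) :
    {t | t < q * ℓ ∧ t % q = j}.ncard = ℓ := by
  have hq : 0 < q := j.zero_le.trans_lt hj
  have : {t | t < q * ℓ ∧ t % q = j} = (fun s => j + q * s) '' Iio ℓ := by
    ext t
    simp only [mem_ofPred_eq, mem_image, mem_Iio]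
    constructor
    · rintro ⟨ht, rfl⟩
      exact ⟨t / q, (Nat.div_lt_iff_lt_mul hq).2 (by rwa [mul_comm]), Nat.mod_add_div t q⟩
    · rintro ⟨s, hs, rfl⟩
      refine ⟨?_, by rw [Nat.add_mul_mod_self_left, Nat.mod_eq_of_lt hj]⟩
      nlinarith
  rw [this, ncard_image_of_injective _ fun s s' h => by simpa [hq.ne'] using h, ncard_Iio_nat]

/-- Vertex `i < p` is joined to the `k` consecutive residues `i k, …, i k + k - 1` modulo `q`. -/
def roundRobinEdges (p k q : ℕ) : Set (ℕ × ℕ) := (fun t => (t / k, t % q)) '' Iio (p * k)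

def Set.IsBiregular {α β : Type*} (E : Set (α × β)) (X : Set α) (Y : Set β) (k ℓ : ℕ) : Prop :=
  E ⊆ X ×ˢ Y ∧ (∀ x ∈ X, {y | (x, y) ∈ E}.ncard = k) ∧ ∀ y ∈ Y, {x | (x, y) ∈ E}.ncard = ℓ

theorem isBiregular_roundRobinEdges {p k q ℓ : ℕ} (hk : 0 < k) (hkq : k ≤ q)
    (hpq : p * k = q * ℓ) : (roundRobinEdges p k q).IsBiregular (Iio p) (Iio q) k ℓ := by
  have hinj : Function.Injective fun t => (t / k, t % q) := fun a b h =>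
    Nat.eq_of_div_eq_of_mod_eq_s16 hk hkq (Prod.ext_iff.1 h).1 (Prod.ext_iff.1 h).2
  refine ⟨?_, fun i hi => ?_, fun j hj => ?_⟩
  · rintro _ ⟨t, ht, rfl⟩
    exact ⟨(Nat.div_lt_iff_lt_mul hk).2 ht, Nat.mod_lt _ (hk.trans_le hkq)⟩
  · have : {j | (i, j) ∈ roundRobinEdges p k q} = (· % q) '' {t | t / k = i} := by
      ext j
      simp only [roundRobinEdges, mem_ofPred_eq, mem_image, mem_Iio, Prod.mk.injEq]
      refine ⟨fun ⟨t, _, h⟩ => ⟨t, h⟩, fun ⟨t, h⟩ => ⟨t, ?_, h⟩⟩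
      exact (Nat.div_lt_iff_lt_mul hk).1 (h.1 ▸ hi)
    have hinjOn : InjOn (· % q) {t | t / k = i} := fun a ha b hb h =>
      hinj (Prod.ext (ha.trans hb.symm) h)
    rw [this, hinjOn.ncard_image, Nat.ncard_setOf_div_eq hk]
  · have : {i | (i, j) ∈ roundRobinEdges p k q} = (· / k) '' {t | t < q * ℓ ∧ t % q = j} := by
      ext i
      simp only [roundRobinEdges, mem_ofPred_eq, mem_image, mem_Iio, Prod.mk.injEq, hpq]
      exact ⟨fun ⟨t, ht, h⟩ => ⟨t, ⟨ht, h.2⟩, h.1⟩, fun ⟨t, ht, h⟩ => ⟨t, ht.1, h, ht.2⟩⟩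
    have hinjOn : InjOn (· / k) {t | t < q * ℓ ∧ t % q = j} := fun a ha b hb h =>
      hinj (Prod.ext h (ha.2.trans hb.2.symm))
    rw [this, hinjOn.ncard_image, Nat.ncard_setOf_lt_mul_and_mod_eq hj]

theorem Set.BijOn.ncard_inter_preimage {α β : Type*} {f : α → β} {s : Set α} {t S : Set β}
    (hf : BijOn f s t) (hS : S ⊆ t) : (s ∩ f ⁻¹' S).ncard = S.ncard := by
  refine BijOn.ncard_eq ⟨fun x hx => hx.2, hf.injOn.mono inter_subset_left, fun y hy => ?_⟩
  obtain ⟨x, hx, rfl⟩ := hf.surjOn (hS hy)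
  exact ⟨x, ⟨hx, hy⟩, rfl⟩

namespace Set.IsBiregular

variable {α β : Type*} {E E₁ E₂ : Set (α × β)} {X X₁ X₂ : Set α} {Y Y₁ Y₂ : Set β} {k ℓ : ℕ}

theorem prod (X : Set α) (Y : Set β) : (X ×ˢ Y).IsBiregular X Y Y.ncard X.ncard := by
  refine ⟨subset_rfl, fun x hx => ?_, fun y hy => ?_⟩
  · congr 1; ext y; simp [hx]
  · congr 1; ext x; simp [hy]

theorem swap (h : E.IsBiregular X Y k ℓ) : (Prod.swap ⁻¹' E).IsBiregular Y X ℓ k :=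
  ⟨fun _ hp => ⟨(h.1 hp).2, (h.1 hp).1⟩, h.2.2, h.2.1⟩

private theorem ncard_union_left (h₁ : E₁.IsBiregular X₁ Y₁ k ℓ) (h₂ : E₂.IsBiregular X₂ Y₂ k ℓ)
    (hX : Disjoint X₁ X₂) {x : α} (hx : x ∈ X₁ ∪ X₂) : {y | (x, y) ∈ E₁ ∪ E₂}.ncard = k := by
  rcases hx with hx | hx
  · have : {y | (x, y) ∈ E₁ ∪ E₂} = {y | (x, y) ∈ E₁} := by
      ext y
      exact or_iff_left_of_imp fun h => absurd (h₂.1 h).1 (hX.notMem_of_mem_left hx)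
    rw [this, h₁.2.1 x hx]
  · have : {y | (x, y) ∈ E₁ ∪ E₂} = {y | (x, y) ∈ E₂} := by
      ext y
      exact or_iff_right_of_imp fun h => absurd (h₁.1 h).1 (hX.notMem_of_mem_right hx)
    rw [this, h₂.2.1 x hx]

theorem union (h₁ : E₁.IsBiregular X₁ Y₁ k ℓ) (h₂ : E₂.IsBiregular X₂ Y₂ k ℓ)
    (hX : Disjoint X₁ X₂) (hY : Disjoint Y₁ Y₂) :
    (E₁ ∪ E₂).IsBiregular (X₁ ∪ X₂) (Y₁ ∪ Y₂) k ℓ :=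
  ⟨union_subset (h₁.1.trans (prod_mono subset_union_left subset_union_left))
      (h₂.1.trans (prod_mono subset_union_right subset_union_right)),
    fun _ hx => ncard_union_left h₁ h₂ hX hx,
    fun _ hy => ncard_union_left h₁.swap h₂.swap hY hy⟩

theorem preimage_prodMap {α' β' : Type*} {E : Set (α' × β')} {X' : Set α'} {Y' : Set β'}
    {a : α → α'} {b : β → β'} (h : E.IsBiregular X' Y' k ℓ) (ha : BijOn a X X')
    (hb : BijOn b Y Y') : (X ×ˢ Y ∩ Prod.map a b ⁻¹' E).IsBiregular X Y k ℓ := by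
  refine ⟨inter_subset_left, fun x hx => ?_, fun y hy => ?_⟩
  · have : {y | (x, y) ∈ X ×ˢ Y ∩ Prod.map a b ⁻¹' E} = Y ∩ b ⁻¹' {j | (a x, j) ∈ E} := by
      ext y; simp [hx]
    rw [this, hb.ncard_inter_preimage (S := {j | (a x, j) ∈ E}) fun j hj => (h.1 hj).2, h.2.1 _ (ha.mapsTo hx)]
  · have : {x | (x, y) ∈ X ×ˢ Y ∩ Prod.map a b ⁻¹' E} = X ∩ a ⁻¹' {i | (i, b y) ∈ E} := by
      ext x; simp [hy]
    rw [this, ha.ncard_inter_preimage (S := {i | (i, b y) ∈ E}) fun i hi => (h.1 hi).1, h.2.2 _ (hb.mapsTo hy)]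

end Set.IsBiregular

theorem Finset.exists_bijOn_Iio_card {α : Type*} (s : Finset α) :
    ∃ f : α → ℕ, BijOn f s (Set.Iio s.card) :=
  s.finite_toSet.exists_bijOn_of_encard_eq <| by
    rw [← Finset.coe_range, encard_coe_eq_coe_finsetCard, encard_coe_eq_coe_finsetCard,
      Finset.card_range]

theorem Finset.exists_isBiregular {α β : Type*} (X : Finset α) (Y : Finset β) {k ℓ : ℕ}
    (hk : 0 < k) (hkY : k ≤ Y.card) (hXY : X.card * k = Y.card * ℓ) :
    ∃ E : Set (α × β), E.IsBiregular X Y k ℓ := by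
  obtain ⟨a, ha⟩ := X.exists_bijOn_Iio_card
  obtain ⟨b, hb⟩ := Y.exists_bijOn_Iio_card
  exact ⟨_, (isBiregular_roundRobinEdges hk hkY hXY).preimage_prodMap ha hb⟩

namespace SimpleGraph

variable {V : Type*}

def IsBiregular (G : SimpleGraph V) (X Y : Set V) (k ℓ : ℕ) : Prop :=
  (∀ v ∈ X, ∀ w ∈ X, ¬G.Adj v w) ∧ (∀ v ∈ Y, ∀ w ∈ Y, ¬G.Adj v w) ∧
    (∀ v ∈ X, Nat.card {w | w ∈ Y ∧ G.Adj v w} = k) ∧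
    ∀ v ∈ Y, Nat.card {w | w ∈ X ∧ G.Adj v w} = ℓ

theorem isBiregular_fromRel {E : Set (V × V)} {X Y : Set V} {k ℓ : ℕ}
    (h : E.IsBiregular X Y k ℓ) (hXY : Disjoint X Y) :
    (fromRel fun v w => (v, w) ∈ E).IsBiregular X Y k ℓ := by
  have hE {v w : V} (hvw : (v, w) ∈ E) : v ∈ X ∧ w ∈ Y := h.1 hvw
  have hnY {v : V} (hv : v ∈ X) : v ∉ Y := hXY.notMem_of_mem_left hv
  refine ⟨?_, ?_, fun v hv => ?_, fun v hv => ?_⟩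
  · rintro v hv w hw ⟨-, hvw | hwv⟩
    exacts [hnY hw (hE hvw).2, hnY hv (hE hwv).2]
  · rintro v hv w hw ⟨-, hvw | hwv⟩
    exacts [hnY (hE hvw).1 hv, hnY (hE hwv).1 hw]
  · rw [Nat.card_coe_set_eq, ← h.2.1 v hv]
    congr 1
    ext w
    refine ⟨fun ⟨hw, _, hvw⟩ => hvw.resolve_right fun hwv => hnY (hE hwv).1 hw,
      fun hvw => ⟨(hE hvw).2, fun e => hnY hv (e ▸ (hE hvw).2), Or.inl hvw⟩⟩
  · rw [Nat.card_coe_set_eq, ← h.2.2 v hv]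
    congr 1
    ext w
    refine ⟨fun ⟨hw, _, hvw⟩ => hvw.resolve_left fun hvw => hnY hw (hE hvw).2,
      fun hwv => ⟨(hE hwv).1, fun e => hnY (e ▸ (hE hwv).1) hv, Or.inr hwv⟩⟩

theorem not_connected_of_forall_adj_mem {G : SimpleGraph V} {S : Set V}
    (hS : ∀ v w, G.Adj v w → v ∈ S → w ∈ S) {u v : V} (hu : u ∈ S) (hv : v ∉ S) :
    ¬G.Connected := fun hG => by
  obtain ⟨d, -, hd₁, hd₂⟩ := (hG u v).some.exists_boundary_dart S hu hv
  exact hd₂ (hS _ _ d.adj hd₁)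

theorem not_connected_fromRel_union {E₁ E₂ : Set (V × V)} {S : Set V} (h₁ : E₁ ⊆ S ×ˢ S)
    (h₂ : E₂ ⊆ Sᶜ ×ˢ Sᶜ) {u v : V} (hu : u ∈ S) (hv : v ∉ S) :
    ¬(fromRel fun a b => (a, b) ∈ E₁ ∪ E₂).Connected := by
  refine not_connected_of_forall_adj_mem (fun a b hab ha => ?_) hu hv
  rcases hab with ⟨-, (h | h) | (h | h)⟩
  exacts [(h₁ h).2, absurd ha (h₂ h).1, (h₁ h).1, absurd ha (h₂ h).2]

theorem exists_isBiregular_not_connected [DecidableEq V] {P Q : Finset V} {k ℓ : ℕ}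
    (hPQ : Disjoint P Q) (hk : 0 < k) (hkQ : 2 * k ≤ Q.card) (hℓP : ℓ ≤ P.card)
    (hdeg : P.card * k = Q.card * ℓ) :
    ∃ G : SimpleGraph V, G.IsBiregular P Q k ℓ ∧ ¬G.Connected := by
  obtain ⟨A, hAP, hA⟩ := Finset.exists_subset_card_eq hℓP
  obtain ⟨B, hBQ, hB⟩ := Finset.exists_subset_card_eq (show k ≤ Q.card by omega)
  obtain ⟨E, hE⟩ := (P \ A).exists_isBiregular (Q \ B) hk
    (by rw [Finset.card_sdiff_of_subset hBQ]; omega)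
    (by rw [Finset.card_sdiff_of_subset hAP, Finset.card_sdiff_of_subset hBQ, Nat.sub_mul,
      Nat.sub_mul, hdeg, hA, hB, mul_comm k ℓ])
  have hAB : ((A : Set V) ×ˢ (B : Set V)).IsBiregular A B k ℓ := by
    simpa only [ncard_coe_finset, hA, hB] using Set.IsBiregular.prod (A : Set V) (B : Set V)
  have hbireg : ((A : Set V) ×ˢ (B : Set V) ∪ E).IsBiregular P Q k ℓ := by
    have := hAB.union hE (Finset.disjoint_coe.2 Finset.disjoint_sdiff)
      (Finset.disjoint_coe.2 Finset.disjoint_sdiff)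
    rwa [← Finset.coe_union, ← Finset.coe_union, Finset.union_sdiff_of_subset hAP,
      Finset.union_sdiff_of_subset hBQ] at this
  obtain ⟨u, hu⟩ : B.Nonempty := Finset.card_pos.1 (hB ▸ hk)
  obtain ⟨v, hv⟩ : (Q \ B).Nonempty :=
    Finset.card_pos.1 (by rw [Finset.card_sdiff_of_subset hBQ]; omega)
  have hout : ∀ x ∈ P \ A ∪ Q \ B, x ∉ A ∪ B := by
    intro x hx
    grind [Finset.disjoint_left]
  refine ⟨_, isBiregular_fromRel hbireg (Finset.disjoint_coe.2 hPQ),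
    not_connected_fromRel_union (S := ↑(A ∪ B)) ?_ ?_ (Finset.mem_union_right A hu)
      (hout v (Finset.mem_union_right _ hv))⟩
  · exact prod_mono (Finset.coe_subset.2 Finset.subset_union_left)
      (Finset.coe_subset.2 Finset.subset_union_right)
  · exact hE.1.trans (prod_mono (fun x hx => hout x (Finset.mem_union_left _ hx))
      fun x hx => hout x (Finset.mem_union_right _ hx))

end SimpleGraph

theorem stmt_16_general {V : Type*} [DecidableEq V]
    (G : SimpleGraph V) [DecidableRel G.Adj] (P Q : Finset V) (k ℓ : ℕ)
    (hdisj : Disjoint P Q)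
    (hP : ∀ v ∈ P, (Q.filter (fun w => G.Adj v w)).card = k)
    (hQ : ∀ v ∈ Q, (P.filter (fun w => G.Adj v w)).card = ℓ)
    (hk : 2 ≤ k) (hkQ : 2 * k ≤ Q.card) (hlP : 2 * ℓ ≤ P.card)
    (hconn : G.Connected) :
    ∃ G' : SimpleGraph V,
      (∀ v ∈ P, ∀ w ∈ P, ¬ G'.Adj v w) ∧
      (∀ v ∈ Q, ∀ w ∈ Q, ¬ G'.Adj v w) ∧
      (∀ v ∈ P, Nat.card {w : V | w ∈ Q ∧ G'.Adj v w} = k) ∧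
      (∀ v ∈ Q, Nat.card {w : V | w ∈ P ∧ G'.Adj v w} = ℓ) ∧
      ¬ G'.Connected ∧ ¬ Nonempty (G ≃g G') := by
  have hdeg : P.card * k = Q.card * ℓ := Finset.card_mul_eq_card_mul G.Adj hP fun w hw => by
    simpa only [Finset.bipartiteBelow, G.adj_comm] using hQ w hw
  obtain ⟨G', ⟨hPind, hQind, hPdeg, hQdeg⟩, hdisc⟩ :=
    SimpleGraph.exists_isBiregular_not_connected hdisj (by omega) hkQ (by omega) hdeg
  exact ⟨G', hPind, hQind, hPdeg, hQdeg, hdisc, fun ⟨e⟩ => hdisc (e.connected_iff.1 hconn)⟩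

/-- If a connected finite simple bipartite graph is `(k, ℓ)`-biregular on a
bipartition `(P, Q)` with `k, ℓ ≥ 2`, `k ≤ |Q|/2` and `ℓ ≤ |P|/2`, then there
is a disconnected `(k, ℓ)`-biregular graph on the same bipartition; hence the
two graphs are non-isomorphic but have the same degree data. -/
theorem stmt_16 {V : Type*} [Fintype V] [DecidableEq V]
    (G : SimpleGraph V) [DecidableRel G.Adj] (P Q : Finset V) (k ℓ : ℕ)
    (hdisj : Disjoint P Q) (hunion : P ∪ Q = Finset.univ)
    (hPind : ∀ v ∈ P, ∀ w ∈ P, ¬ G.Adj v w)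
    (hQind : ∀ v ∈ Q, ∀ w ∈ Q, ¬ G.Adj v w)
    (hP : ∀ v ∈ P, (Q.filter (fun w => G.Adj v w)).card = k)
    (hQ : ∀ v ∈ Q, (P.filter (fun w => G.Adj v w)).card = ℓ)
    (hk : 2 ≤ k) (hl : 2 ≤ ℓ) (hkQ : 2 * k ≤ Q.card) (hlP : 2 * ℓ ≤ P.card)
    (hconn : G.Connected) :
    ∃ G' : SimpleGraph V,
      (∀ v ∈ P, ∀ w ∈ P, ¬ G'.Adj v w) ∧
      (∀ v ∈ Q, ∀ w ∈ Q, ¬ G'.Adj v w) ∧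
      (∀ v ∈ P, Nat.card {w : V | w ∈ Q ∧ G'.Adj v w} = k) ∧
      (∀ v ∈ Q, Nat.card {w : V | w ∈ P ∧ G'.Adj v w} = ℓ) ∧
      ¬ G'.Connected ∧ ¬ Nonempty (G ≃g G') :=
  stmt_16_general G P Q k ℓ hdisj hP hQ hk hkQ hlP hconn
end
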